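/- arXiv:1410.6721 — 2 statements merged into one kernel-verified Lean document; each statement's English description precedes it below -/
import Mathlib

section
/- Let A ∈ ℕ with A ≥ 3 and set q_A := 2^{2A} + 2^{2A−2} + ⋯ + 2² + 2⁰. Let m ∈ {0,1,…,A−3} and s ∈ {m+2, m+3, …, A−1}, and let x ∈ G satisfy x_j = 0 for 0 ≤ j ≤ 2m−1, x_{2m} = 1, x_j = 0 for 2m+1 ≤ j ≤ 2s−1, x_{2s} = 1 (the coordinates x_{2s+1},…,x_{2A−1} and x_j for j ≥ 2A being arbitrary). Then q_{A−1} |K_{q_{A−1}}^w(x)| ≥ 2^{2m+2s−3}. -/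
open MeasureTheory ENNReal

noncomputable section

/-- The Walsh group: countable product of copies of ℤ₂. -/
abbrev G : Type := ℕ → ZMod 2

instance : TopologicalSpace (ZMod 2) := ⊥
instance : DiscreteTopology (ZMod 2) := ⟨rfl⟩
instance : IsTopologicalAddGroup (ZMod 2) :=
  { continuous_add := continuous_of_discreteTopology
    continuous_neg := continuous_of_discreteTopology }
instance : MeasurableSpace G := borel G
instance : BorelSpace G := ⟨rfl⟩

/-- The normalized Haar (= product) measure on `G`. -/
def μ : Measure G := Measure.addHaarMeasure (⊤ : TopologicalSpace.PositiveCompacts G)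

/-- The `k`-th Rademacher function. -/
def rad (k : ℕ) (x : G) : ℝ := (-1 : ℝ) ^ (x k).val

/-- `|n| = ⌊log₂ n⌋`. -/
def lg (n : ℕ) : ℕ := Nat.log 2 n

/-- The Walsh–Paley functions. -/
def walsh (n : ℕ) (x : G) : ℝ :=
  ∏ k ∈ Finset.range (n + 1), rad k x ^ (n.testBit k).toNat

/-- The Walsh–Kaczmarz functions. -/
def kacz (n : ℕ) (x : G) : ℝ :=
  if n = 0 then 1
  else rad (lg n) x *
    ∏ k ∈ Finset.range (lg n), rad (lg n - 1 - k) x ^ (n.testBit k).toNat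

/-- Walsh–Paley Dirichlet kernel. -/
def DW (n : ℕ) (x : G) : ℝ := ∑ k ∈ Finset.range n, walsh k x

/-- Walsh–Kaczmarz Dirichlet kernel. -/
def DK (n : ℕ) (x : G) : ℝ := ∑ k ∈ Finset.range n, kacz k x

/-- Walsh–Paley Fejér kernel (with `KW 0 = 0`). -/
def KW (n : ℕ) (x : G) : ℝ := (∑ k ∈ Finset.range n, DW k x) / n

/-- Walsh–Kaczmarz Fejér kernel. -/
def KK (n : ℕ) (x : G) : ℝ := (∑ k ∈ Finset.range n, DK k x) / n

/-- Reversal of the first `A` coordinates. -/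
def tau (A : ℕ) (x : G) : G := fun k => if k < A then x (A - 1 - k) else x k

/-- Walsh–Fourier coefficients. -/
def coefW (f : G → ℝ) (i : ℕ) : ℝ := ∫ x, f x * walsh i x ∂μ

/-- Walsh–Kaczmarz–Fourier coefficients. -/
def coefK (f : G → ℝ) (i : ℕ) : ℝ := ∫ x, f x * kacz i x ∂μ

/-- Partial sums of the Walsh–Fourier series. -/
def SW (f : G → ℝ) (M : ℕ) (x : G) : ℝ := ∑ i ∈ Finset.range M, coefW f i * walsh i x

/-- Partial sums of the Walsh–Kaczmarz–Fourier series. -/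
def SK (f : G → ℝ) (M : ℕ) (x : G) : ℝ := ∑ i ∈ Finset.range M, coefK f i * kacz i x

/-- Fejér means of the Walsh–Kaczmarz–Fourier series. -/
def sigmaK (f : G → ℝ) (n : ℕ) (x : G) : ℝ := (∑ j ∈ Finset.range n, SK f j x) / n

/-- The dyadic martingale maximal function. -/
def fstar (f : G → ℝ) (x : G) : ℝ≥0∞ := ⨆ n : ℕ, ENNReal.ofReal |SW f (2 ^ n) x|

/-- Dyadic interval of rank `n` around `x`. -/
def cyl (n : ℕ) (x : G) : Set G := {y : G | ∀ k < n, y k = x k}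

/-- Dyadic interval `I_n` around `0`. -/
def In (n : ℕ) : Set G := cyl n 0

/-- `e t`: the element of `G` whose `t`-th coordinate is `1` and the rest are `0`. -/
def e (t : ℕ) : G := fun k => if k = t then 1 else 0

/-- `q_m = 2^{2m} + 2^{2m-2} + ⋯ + 2² + 2⁰`. -/
def qA (m : ℕ) : ℕ := ∑ i ∈ Finset.range (m + 1), 4 ^ i

/-- `f_m = D_{2^{2m+1}}^w − D_{2^{2m}}^w`. -/
def fm (m : ℕ) (x : G) : ℝ := DW (2 ^ (2 * m + 1)) x - DW (2 ^ (2 * m)) x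

/-- The weak `L^p` quasinorm `‖f‖_{L_{p,∞}} = sup_{λ>0} λ · μ{|f|>λ}^{1/p}`. -/
def wnorm (f : G → ℝ) (p : ℝ) : ℝ≥0∞ :=
  ⨆ (l : ℝ) (_ : 0 < l), ENNReal.ofReal l * μ {x : G | l < |f x|} ^ (1 / p)

/-- The set `J_N^{m,l}` (with `m : ℤ`, `-1 ≤ m ≤ l`). -/
def Jset (N l : ℕ) (m : ℤ) : Set G :=
  {x : G | (∀ j : ℕ, m < (j : ℤ) → j < l → x j = 0) ∧ x l = 1 ∧
    (∀ j : ℕ, l < j → j < N → x j = 0) ∧ (0 ≤ m → x m.toNat = 1)}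


/-! ### Auxiliary lemmas for the proof -/

lemma grad_zero {x : G} {k : ℕ} (h : x k = 0) : rad k x = 1 := by
  unfold rad; rw [h, ZMod.val_zero, pow_zero]

lemma grad_one {x : G} {k : ℕ} (h : x k = 1) : rad k x = -1 := by
  unfold rad; rw [h, ZMod.val_one, pow_one]

lemma grad_abs (k : ℕ) (x : G) : |rad k x| = 1 := by
  unfold rad; rw [abs_pow, abs_neg, abs_one, one_pow]

lemma gbit_lo (t c b i : ℕ) (hi : i < t) :
    (2^t*c + b).testBit i = b.testBit i := by
  obtain ⟨d, rfl⟩ : ∃ d, t = i + 1 + d := ⟨t - (i+1), by omega⟩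
  rw [Nat.testBit_eq_decide_div_mod_eq, Nat.testBit_eq_decide_div_mod_eq]
  have h : 2^(i+1+d)*c = 2^i * (2 * (2^d * c)) := by ring
  rw [h, Nat.mul_add_div (Nat.two_pow_pos i), Nat.mul_add_mod]

lemma gbit_hi (t c b i : ℕ) (hb : b < 2^t) (hi : t ≤ i) :
    (2^t*c + b).testBit i = c.testBit (i - t) := by
  rw [Nat.testBit_eq_decide_div_mod_eq, Nat.testBit_eq_decide_div_mod_eq]
  have h1 : (2^t*c + b) / 2^t = c := by
    rw [Nat.mul_add_div (Nat.two_pow_pos t) c b, Nat.div_eq_of_lt hb, Nat.add_zero]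
  have h2 : (2:ℕ)^i = 2^t * 2^(i-t) := by rw [← pow_add]; congr 1; omega
  rw [h2, ← Nat.div_div_eq_div_mul, h1]

lemma gbit_split (t c b i : ℕ) (hb : b < 2^t) :
    (((2^t*c + b).testBit i).toNat : ℕ)
      = ((2^t*c).testBit i).toNat + (b.testBit i).toNat := by
  rcases lt_or_ge i t with hi | hi
  · rw [gbit_lo t c b i hi]
    have : (2^t*c).testBit i = false := by simpa using gbit_lo t c 0 i hi
    simp [this]
  · rw [gbit_hi t c b i hb hi]
    have h1 : (2^t*c).testBit i = c.testBit (i-t) := by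
      simpa using gbit_hi t c 0 i (Nat.two_pow_pos t) hi
    have h2 : b.testBit i = false :=
      Nat.testBit_lt_two_pow (lt_of_lt_of_le hb (Nat.pow_le_pow_right (by norm_num) hi))
    simp [h1, h2]

lemma gaux_prod_ext (x : G) (n : ℕ) {N M : ℕ} (hNM : N ≤ M) (h : n < 2^N) :
    ∏ k ∈ Finset.range M, rad k x ^ (n.testBit k).toNat
      = ∏ k ∈ Finset.range N, rad k x ^ (n.testBit k).toNat := by
  refine (Finset.prod_subset (Finset.range_subset_range.2 hNM) ?_).symm
  intro k _ hk
  have hk' : N ≤ k := le_of_not_gt (fun h' => hk (Finset.mem_range.2 h'))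
  have : n.testBit k = false :=
    Nat.testBit_lt_two_pow (h.trans_le (Nat.pow_le_pow_right (by norm_num) hk'))
  simp [this]

lemma gwalsh_eq_prod (x : G) {n N : ℕ} (h : n < 2^N) :
    walsh n x = ∏ k ∈ Finset.range N, rad k x ^ (n.testBit k).toNat := by
  unfold walsh
  rcases le_total (n+1) N with hle | hle
  · exact (gaux_prod_ext x n hle ((Nat.lt_two_pow_self (n := n)).trans
      (Nat.pow_lt_pow_right (by norm_num) (Nat.lt_succ_self n)))).symm
  · exact gaux_prod_ext x n hle h

lemma gwalsh_split (x : G) (t c b : ℕ) (hb : b < 2^t) :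
    walsh (2^t * c + b) x = walsh (2^t * c) x * walsh b x := by
  obtain ⟨N, h1⟩ : ∃ N, 2^t*c + b < 2^N := ⟨_, Nat.lt_two_pow_self⟩
  have h2 : 2^t*c < 2^N := lt_of_le_of_lt (Nat.le_add_right _ _) h1
  have h3 : b < 2^N := lt_of_le_of_lt (Nat.le_add_left _ _) h1
  rw [gwalsh_eq_prod x h1, gwalsh_eq_prod x h2, gwalsh_eq_prod x h3,
    ← Finset.prod_mul_distrib]
  refine Finset.prod_congr rfl (fun i _ => ?_)
  rw [← pow_add, gbit_split t c b i hb]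

lemma gwalsh_two_pow (x : G) (t : ℕ) : walsh (2^t) x = rad t x := by
  rw [gwalsh_eq_prod x (Nat.pow_lt_pow_right (a := 2) (by norm_num) (Nat.lt_succ_self t)),
    Finset.prod_range_succ, Nat.testBit_two_pow_self]
  have h : ∀ i ∈ Finset.range t, rad i x ^ ((2^t).testBit i).toNat = 1 := by
    intro i hi
    have : (2^t).testBit i = false :=
      Nat.testBit_two_pow_of_ne (fun h => absurd h.symm (Finset.mem_range.1 hi).ne)
    simp [this]
  rw [Finset.prod_eq_one h, one_mul, Bool.toNat_true, pow_one]

/-- `NW n = n · KW n`, the sum of the Dirichlet kernels. -/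
def NW (n : ℕ) (x : G) : ℝ := ∑ k ∈ Finset.range n, DW k x

lemma gDW_split (x : G) (t c b : ℕ) (hb : b ≤ 2^t) :
    DW (2^t * c + b) x = DW (2^t*c) x + walsh (2^t*c) x * DW b x := by
  unfold DW
  rw [Finset.sum_range_add, Finset.mul_sum]
  congr 1
  refine Finset.sum_congr rfl (fun k hk => ?_)
  exact gwalsh_split x t c k (lt_of_lt_of_le (Finset.mem_range.1 hk) hb)

lemma gNW_split (x : G) (t c b : ℕ) (hb : b ≤ 2^t) :
    NW (2^t * c + b) x
      = NW (2^t*c) x + b * DW (2^t*c) x + walsh (2^t*c) x * NW b x := by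
  unfold NW
  rw [Finset.sum_range_add]
  have h : ∀ k ∈ Finset.range b,
      DW (2^t*c + k) x = DW (2^t*c) x + walsh (2^t*c) x * DW k x :=
    fun k hk => gDW_split x t c k (le_of_lt (lt_of_lt_of_le (Finset.mem_range.1 hk) hb))
  rw [Finset.sum_congr rfl h, Finset.sum_add_distrib, ← Finset.mul_sum]
  simp [add_assoc, mul_comm]

lemma gDW_two_pow (x : G) : ∀ t, DW (2^t) x = ∏ j ∈ Finset.range t, (1 + rad j x) := by
  intro t
  induction t with
  | zero => simp [DW, walsh]
  | succ t ih =>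
    have h2 : (2:ℕ)^(t+1) = 2^t * 1 + 2^t := by ring
    rw [h2, gDW_split x t 1 (2^t) le_rfl, mul_one, gwalsh_two_pow, ih,
      Finset.prod_range_succ]
    ring

lemma gqA_zero : qA 0 = 1 := by simp [qA]

lemma gqA_succ (j : ℕ) : qA (j+1) = 2^(2*(j+1)) * 1 + qA j := by
  have h4 : (4:ℕ)^(j+1) = 2^(2*(j+1)) := by rw [pow_mul]; norm_num
  unfold qA
  rw [Finset.sum_range_succ, h4]
  ring

lemma gqA_le (j : ℕ) : 2 * qA j ≤ 2^(2*(j+1)) := by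
  induction j with
  | zero => rw [gqA_zero]; norm_num
  | succ j ih =>
    rw [gqA_succ j]
    have h : (2:ℕ)^(2*(j+1+1)) = 4 * 2^(2*(j+1)) := by ring
    omega

lemma gqA_pos (j : ℕ) : 0 < qA j :=
  Finset.sum_pos (fun i _ => Nat.pow_pos (by norm_num))
    ⟨0, Finset.mem_range.2 (Nat.succ_pos j)⟩

/-- Goginava's lower bound for `q_{A-1} |K_{q_{A-1}}^w|`. -/
theorem goginava_kernel_lower_bound (A : ℕ) (hA : 3 ≤ A) (m s : ℕ)
    (hm : m ≤ A - 3) (hs1 : m + 2 ≤ s) (hs2 : s ≤ A - 1) (x : G)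
    (h1 : ∀ j, j < 2 * m → x j = 0) (h2 : x (2 * m) = 1)
    (h3 : ∀ j, 2 * m < j → j < 2 * s → x j = 0) (h4 : x (2 * s) = 1) :
    (2 : ℝ) ^ (2 * m + 2 * s - 3) ≤ (qA (A - 1) : ℝ) * |KW (qA (A - 1)) x| := by
  -- replace s by m + 2 + w
  obtain ⟨w, rfl⟩ : ∃ w, s = m + 2 + w := ⟨s - (m+2), by omega⟩
  set s := m + 2 + w with hs
  have hms : 2*m < 2*s := by omega
  -- Dirichlet kernel values at x
  have hDWpos : ∀ t, t ≤ 2*m → DW (2^t) x = (2:ℝ)^t := by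
    intro t ht
    rw [gDW_two_pow]
    have hone : ∀ j ∈ Finset.range t, (1 + rad j x) = 2 := by
      intro j hj
      rw [grad_zero (h1 j (lt_of_lt_of_le (Finset.mem_range.1 hj) ht))]
      norm_num
    rw [Finset.prod_congr rfl hone, Finset.prod_const, Finset.card_range]
  have hDWzero : ∀ t, 2*m < t → DW (2^t) x = 0 := by
    intro t ht
    rw [gDW_two_pow]
    refine Finset.prod_eq_zero (Finset.mem_range.2 ht) ?_
    rw [grad_one h2]; ring
  -- the function F n = NW (2^n) x
  set F : ℕ → ℝ := fun n => NW (2^n) x with hF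
  have hFrec : ∀ n, F (n+1) = (1 + rad n x) * F n + 2^n * DW (2^n) x := by
    intro n
    have h2n : (2:ℕ)^(n+1) = 2^n * 1 + 2^n := by ring
    show NW (2^(n+1)) x = _
    rw [h2n, gNW_split x n 1 (2^n) le_rfl, mul_one, gwalsh_two_pow]
    push_cast
    ring
  have hF0 : F 0 = 0 := by
    show NW (2^0) x = 0
    norm_num [NW, DW]
  have hF1 : ∀ k, k ≤ 2*m → 2 * F k = 2^(2*k) - 2^k := by
    intro k
    induction k with
    | zero => intro _; rw [hF0]; norm_num
    | succ k ih =>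
      intro hk
      have hk' : k ≤ 2*m := by omega
      rw [hFrec k, grad_zero (h1 k (by omega)), hDWpos k hk']
      linear_combination 2 * ih hk'
  have hF2 : ∀ d, 2*m+1+d ≤ 2*s → F (2*m+1+d) = 2^(4*m+d) := by
    intro d
    induction d with
    | zero =>
      intro _
      rw [hFrec (2*m), grad_one h2, hDWpos (2*m) le_rfl]
      ring
    | succ d ih =>
      intro hd
      rw [show 2*m+1+(d+1) = (2*m+1+d)+1 from rfl, hFrec (2*m+1+d),
        grad_zero (h3 (2*m+1+d) (by omega) (by omega)),
        hDWzero (2*m+1+d) (by omega), ih (by omega)]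
      ring
  have hF3 : ∀ d, F (2*s+1+d) = 0 := by
    intro d
    induction d with
    | zero =>
      rw [hFrec (2*s), grad_one h4, hDWzero (2*s) hms]
      ring
    | succ d ih =>
      rw [show 2*s+1+(d+1) = (2*s+1+d)+1 from rfl, hFrec (2*s+1+d),
        hDWzero (2*s+1+d) (by omega), ih]
      ring
  -- the function Q j = NW (qA j) x
  set Q : ℕ → ℝ := fun j => NW (qA j) x with hQ
  have hQrec : ∀ j, Q (j+1)
      = F (2*(j+1)) + (qA j : ℝ) * DW (2^(2*(j+1))) x + rad (2*(j+1)) x * Q j := by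
    intro j
    show NW (qA (j+1)) x = _
    have hle : qA j ≤ 2^(2*(j+1)) := le_trans (Nat.le_mul_of_pos_left _ (by norm_num)) (gqA_le j)
    rw [gqA_succ j, gNW_split x (2*(j+1)) 1 (qA j) hle, mul_one, gwalsh_two_pow]
  have hQ0 : Q 0 = 0 := by
    show NW (qA 0) x = 0
    rw [gqA_zero]
    norm_num [NW, DW]
  have hQnonneg : ∀ j, j < m → 0 ≤ Q j := by
    intro j
    induction j with
    | zero => intro _; rw [hQ0]
    | succ j ih =>
      intro hj
      rw [hQrec j, grad_zero (h1 (2*(j+1)) (by omega)), hDWpos (2*(j+1)) (by omega)]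
      have hf : 0 ≤ F (2*(j+1)) := by
        have h := hF1 (2*(j+1)) (by omega)
        have : (2:ℝ)^(2*(j+1)) ≤ 2^(2*(2*(j+1))) :=
          pow_le_pow_right₀ (by norm_num) (by omega)
        linarith
      have hq : (0:ℝ) ≤ (qA j : ℝ) := Nat.cast_nonneg _
      have hp : (0:ℝ) ≤ 2^(2*(j+1)) := by positivity
      have := ih (by omega)
      nlinarith
  have hQm : Q m ≤ 2^(4*m) := by
    rcases m with _ | m'
    · rw [hQ0]; norm_num
    · rw [hQrec m', grad_one h2, hDWpos (2*(m'+1)) le_rfl]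
      have hf := hF1 (2*(m'+1)) le_rfl
      have hq : (2:ℝ) * (qA m') ≤ 2^(2*(m'+1)) := by
        have := gqA_le m'
        have h : ((2 * qA m' : ℕ) : ℝ) ≤ ((2^(2*(m'+1)) : ℕ) : ℝ) := Nat.cast_le.mpr this
        push_cast at h
        linarith
      have hp : (0:ℝ) < 2^(2*(m'+1)) := by positivity
      have hQn := hQnonneg m' (Nat.lt_succ_self m')
      have hmul : (2:ℝ) * (qA m') * 2^(2*(m'+1)) ≤ 2^(2*(m'+1)) * 2^(2*(m'+1)) :=
        mul_le_mul_of_nonneg_right hq (le_of_lt hp)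
      have he : (2:ℝ)^(2*(m'+1)) * 2^(2*(m'+1)) = 2^(4*(m'+1)) := by ring
      have he2 : (2:ℝ)^(2*(2*(m'+1))) = 2^(4*(m'+1)) := by ring
      have hp2 : (0:ℝ) < 2^(2*(m'+1)) := hp
      nlinarith
  have hQmid : ∀ d, m + d + 1 ≤ s → Q (m+d) ≤ 2^(4*m) + 2^(4*m+2*d) := by
    intro d
    induction d with
    | zero =>
      intro _
      have : (0:ℝ) ≤ 2^(4*m+2*0) := by positivity
      have := hQm
      simp only [Nat.add_zero]
      linarith
    | succ d ih =>
      intro hd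
      rw [show m+(d+1) = (m+d)+1 from rfl, hQrec (m+d),
        grad_zero (h3 (2*((m+d)+1)) (by omega) (by omega)),
        hDWzero (2*((m+d)+1)) (by omega)]
      have hf : F (2*((m+d)+1)) = 2^(4*m+(2*d+1)) := by
        have h := hF2 (2*d+1) (by omega)
        rw [show 2*m+1+(2*d+1) = 2*((m+d)+1) by ring] at h
        exact h
      have hih := ih (by omega)
      have e1 : (2:ℝ)^(4*m+(2*d+1)) = 2 * 2^(4*m+2*d) := by ring
      have e2 : (2:ℝ)^(4*m+2*(d+1)) = 4 * 2^(4*m+2*d) := by ring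
      have hp : (0:ℝ) ≤ 2^(4*m+2*d) := by positivity
      rw [hf]
      linarith
  have hQs : 2^(4*m+2*w+1) ≤ Q s := by
    have hrec := hQrec (m+1+w)
    rw [show (m+1+w)+1 = s by omega] at hrec
    rw [hrec, grad_one h4, hDWzero (2*s) hms]
    have hf : F (2*s) = 2^(4*m+(2*w+3)) := by
      have h := hF2 (2*w+3) (by omega)
      rw [show 2*m+1+(2*w+3) = 2*s by omega] at h
      exact h
    have hmid := hQmid (1+w) (by omega)
    rw [show m+(1+w) = m+1+w by omega] at hmid
    have e1 : (2:ℝ)^(4*m+(2*w+3)) = 8 * 2^(4*m+2*w) := by ring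
    have e2 : (2:ℝ)^(4*m+2*(1+w)) = 4 * 2^(4*m+2*w) := by ring
    have e3 : (2:ℝ)^(4*m+2*w+1) = 2 * 2^(4*m+2*w) := by ring
    have e4 : (2:ℝ)^(4*m) ≤ 2^(4*m+2*w) := pow_le_pow_right₀ (by norm_num) (by omega)
    have hp : (0:ℝ) ≤ 2^(4*m+2*w) := by positivity
    rw [hf]
    linarith
  have hQabs : ∀ d, |Q (s+d)| = |Q s| := by
    intro d
    induction d with
    | zero => rfl
    | succ d ih =>
      rw [show s+(d+1) = (s+d)+1 from rfl, hQrec (s+d),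
        hDWzero (2*((s+d)+1)) (by omega)]
      have hf : F (2*((s+d)+1)) = 0 := by
        have h := hF3 (2*d+1)
        rw [show 2*s+1+(2*d+1) = 2*((s+d)+1) by ring] at h
        exact h
      rw [hf]
      rw [show (0:ℝ) + ↑(qA (s+d)) * 0 + rad (2*((s+d)+1)) x * Q (s+d)
          = rad (2*((s+d)+1)) x * Q (s+d) by ring]
      rw [abs_mul, grad_abs, one_mul, ih]
  -- conclusion
  have hA1 : A - 1 = s + (A - 1 - s) := by omega
  have hfinal : |Q (A-1)| = |Q s| := by rw [hA1]; exact hQabs (A-1-s)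
  have hKW : (qA (A-1) : ℝ) * |KW (qA (A-1)) x| = |Q (A-1)| := by
    have hq : (0:ℝ) < (qA (A-1) : ℝ) := by exact_mod_cast gqA_pos (A-1)
    show (qA (A-1) : ℝ) * |NW (qA (A-1)) x / (qA (A-1) : ℝ)| = _
    rw [abs_div, abs_of_pos hq, mul_div_cancel₀ _ (ne_of_gt hq)]
  rw [hKW, hfinal]
  have habs : Q s ≤ |Q s| := le_abs_self _
  have hexp : 2*m+2*s-3 = 4*m+2*w+1 := by omega
  rw [hexp]
  linarith
end
end

section
/- For every n ≥ 1 and every x ∈ G, the Walsh–Kaczmarz Dirichlet kernel satisfies D_n^κ(x) = D_{2^{|n|}}^w(x) + r_{|n|}(x) · D_{n−2^{|n|}}^w(τ_{|n|}(x)). -/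
open MeasureTheory ENNReal

noncomputable section

lemma walsh_eq_prod (n N : ℕ) (h : n < 2 ^ N) (x : G) :
    walsh n x = ∏ k ∈ Finset.range N, rad k x ^ (n.testBit k).toNat := by
  have key : ∀ M : ℕ, n < 2 ^ M → M ≤ (n+1) ⊔ N →
      (∏ k ∈ Finset.range M, rad k x ^ (n.testBit k).toNat)
        = ∏ k ∈ Finset.range ((n+1) ⊔ N), rad k x ^ (n.testBit k).toNat := by
    intro M hM hle
    refine Finset.prod_subset (Finset.range_subset_range.2 hle) ?_
    intro k _ hk
    simp only [Finset.mem_range, not_lt] at hk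
    rw [Nat.testBit_lt_two_pow (lt_of_lt_of_le hM (Nat.pow_le_pow_right (by norm_num) hk))]
    rfl
  rw [walsh, key (n+1) (lt_trans (Nat.lt_two_pow_self (n := n)) (Nat.pow_lt_pow_succ one_lt_two))
    le_sup_left, key N h le_sup_right]

lemma walsh_two_pow_add (s j : ℕ) (hj : j < 2 ^ s) (x : G) :
    walsh (2 ^ s + j) x = rad s x * walsh j x := by
  have h2 : 2 ^ s + j < 2 ^ (s + 1) := by
    have := Nat.pow_lt_pow_succ (a := 2) one_lt_two (n := s); omega
  rw [walsh_eq_prod _ (s+1) h2 x, walsh_eq_prod j s hj x, Finset.prod_range_succ,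
    Nat.testBit_two_pow_add_eq, Nat.testBit_lt_two_pow hj]
  simp only [Bool.not_false, Bool.toNat_true, pow_one]
  rw [mul_comm]
  congr 1
  refine Finset.prod_congr rfl fun k hk => ?_
  rw [Nat.testBit_two_pow_add_gt (Finset.mem_range.1 hk)]

lemma DW_two_pow_eq_prod (s : ℕ) (x : G) :
    DW (2 ^ s) x = ∏ j ∈ Finset.range s, (1 + rad j x) := by
  induction s with
  | zero => simp [DW, walsh, rad]
  | succ s ih =>
    rw [Finset.prod_range_succ, ← ih, DW, pow_succ, mul_two, Finset.sum_range_add]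
    rw [show (∑ k ∈ Finset.range (2 ^ s), walsh (2 ^ s + k) x)
        = ∑ k ∈ Finset.range (2 ^ s), rad s x * walsh k x from
      Finset.sum_congr rfl fun k hk => walsh_two_pow_add s k (Finset.mem_range.1 hk) x]
    rw [← Finset.mul_sum]
    show DW (2 ^ s) x + rad s x * DW (2 ^ s) x = _
    ring

lemma rad_tau (s k : ℕ) (hk : k < s) (x : G) :
    rad k (tau s x) = rad (s - 1 - k) x := by
  simp [rad, tau, hk]

lemma DW_two_pow_tau (s : ℕ) (x : G) : DW (2 ^ s) (tau s x) = DW (2 ^ s) x := by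
  rw [DW_two_pow_eq_prod, DW_two_pow_eq_prod]
  rw [show (∏ j ∈ Finset.range s, (1 + rad j (tau s x)))
      = ∏ j ∈ Finset.range s, (1 + rad (s - 1 - j) x) from
    Finset.prod_congr rfl fun j hj => by rw [rad_tau s j (Finset.mem_range.1 hj)]]
  exact Finset.prod_range_reflect (fun j => 1 + rad j x) s

lemma lg_two_pow_add (s m : ℕ) (hm : m < 2 ^ s) : lg (2 ^ s + m) = s := by
  have h2 : 2 ^ s + m < 2 ^ (s + 1) := by
    have := Nat.pow_lt_pow_succ (a := 2) one_lt_two (n := s); omega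
  exact Nat.log_eq_of_pow_le_of_lt_pow (Nat.le_add_right _ _) h2

lemma kacz_two_pow_add (s m : ℕ) (hm : m < 2 ^ s) (x : G) :
    kacz (2 ^ s + m) x = rad s x * walsh m (tau s x) := by
  have hne : 2 ^ s + m ≠ 0 := by positivity
  rw [kacz, if_neg hne, lg_two_pow_add s m hm, walsh_eq_prod m s hm (tau s x)]
  congr 1
  refine Finset.prod_congr rfl fun k hk => ?_
  rw [Nat.testBit_two_pow_add_gt (Finset.mem_range.1 hk),
    rad_tau s k (Finset.mem_range.1 hk)]

lemma DK_two_pow (s : ℕ) (x : G) : DK (2 ^ s) x = DW (2 ^ s) x := by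
  induction s with
  | zero => simp [DK, DW, kacz, walsh, rad]
  | succ s ih =>
    rw [DK, pow_succ, mul_two, Finset.sum_range_add]
    rw [show (∑ k ∈ Finset.range (2 ^ s), kacz (2 ^ s + k) x)
        = ∑ k ∈ Finset.range (2 ^ s), rad s x * walsh k (tau s x) from
      Finset.sum_congr rfl fun k hk => kacz_two_pow_add s k (Finset.mem_range.1 hk) x]
    rw [← Finset.mul_sum]
    show DK (2 ^ s) x + rad s x * DW (2 ^ s) (tau s x) = _
    rw [ih, DW_two_pow_tau, show 2 ^ s + 2 ^ s = 2 ^ (s + 1) by ring,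
      DW_two_pow_eq_prod, DW_two_pow_eq_prod, Finset.prod_range_succ]
    ring

/-- Decomposition of the Walsh–Kaczmarz Dirichlet kernel. -/
theorem kaczmarz_dirichlet_decomposition (n : ℕ) (hn : 1 ≤ n) (x : G) :
    DK n x = DW (2 ^ lg n) x + rad (lg n) x * DW (n - 2 ^ lg n) (tau (lg n) x) := by
  set A := lg n with hA
  have hle : 2 ^ A ≤ n := Nat.pow_log_le_self 2 (by omega)
  have hlt : n < 2 ^ (A + 1) := Nat.lt_pow_succ_log_self one_lt_two n
  have hdecomp : n = 2 ^ A + (n - 2 ^ A) := by omega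
  rw [DK, hdecomp, Finset.sum_range_add, ← DK, DK_two_pow]
  congr 1
  rw [show (∑ k ∈ Finset.range (n - 2 ^ A), kacz (2 ^ A + k) x)
      = ∑ k ∈ Finset.range (n - 2 ^ A), rad A x * walsh k (tau A x) from
    Finset.sum_congr rfl fun k hk => kacz_two_pow_add A k
      (by have := Finset.mem_range.1 hk; omega) x]
  rw [← Finset.mul_sum, Nat.add_sub_cancel_left]
  rfl
end
end
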